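/- arXiv:2403.03298 — 4 statements merged into one kernel-verified Lean document; each statement's English description precedes it below -/
import Mathlib

section
/- Let $\alpha \in (0,2)$, $\beta_1 > \alpha$, $\Lambda \ge 1$, $T \ge 1$, and let $\psi:(0,\infty)\to(0,\infty)$ be a strictly increasing continuous bijection with $\psi(1)=1$ satisfying $\psi(R)/\psi(r) \ge \Lambda^{-1}(R/r)^{\beta_1}$ for all $0<r\le R$. Then there is a constant $C = C(d,\alpha,\beta_1,\Lambda,T) > 0$ such that for all $t \in (0,T]$ and $r > 0$: $\frac{t^2}{\psi^{-1}(t)^{d+2\alpha}}\Big(1 \wedge \frac{\psi^{-1}(t)}{r}\Big)^{d+2\alpha} \le C\, t^{-d/\alpha}\Big(1 \wedge \frac{t^{1/\alpha}}{r}\Big)^{d+\alpha}$. -/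
theorem stmt_10 (d : ℕ) (hd : 1 ≤ d) (α β₁ Λ T : ℝ) (hα : 0 < α) (hα2 : α < 2)
    (hβ : α < β₁) (hΛ : 1 ≤ Λ) (hT : 1 ≤ T)
    (ψ ψinv : ℝ → ℝ) (hψpos : ∀ r > 0, 0 < ψ r)
    (hψmono : StrictMonoOn ψ (Set.Ioi 0)) (hψcont : ContinuousOn ψ (Set.Ioi 0))
    (hψ1 : ψ 1 = 1)
    (hscale : ∀ r R : ℝ, 0 < r → r ≤ R → Λ⁻¹ * (R / r) ^ β₁ ≤ ψ R / ψ r)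
    (hinv : ∀ t > 0, 0 < ψinv t ∧ ψ (ψinv t) = t) :
    ∃ C > 0, ∀ t : ℝ, 0 < t → t ≤ T → ∀ r > 0,
      t ^ 2 / (ψinv t) ^ ((d : ℝ) + 2 * α) * (min 1 (ψinv t / r)) ^ ((d : ℝ) + 2 * α)
        ≤ C * t ^ (-((d : ℝ) / α)) * (min 1 (t ^ (1/α) / r)) ^ ((d : ℝ) + α) := by
  have hβ0 : 0 < β₁ := hα.trans hβ
  have hΛ0 : (0:ℝ) < Λ := by linarith
  have hK : (1:ℝ) ≤ Λ * T := by nlinarith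
  have hKpos : (0:ℝ) < Λ * T := by linarith
  refine ⟨(Λ * T) ^ (((d:ℝ) + 2 * α) / α), Real.rpow_pos_of_pos hKpos _, ?_⟩
  intro t ht htT r hr
  obtain ⟨hs, hψs⟩ := hinv t ht
  set s := ψinv t with hs_def
  set A := (d:ℝ) + 2 * α with hA
  set B := (d:ℝ) + α with hB
  set K := Λ * T with hKdef
  have hA0 : 0 ≤ A := by positivity
  have htK : t / K ≤ 1 := by
    rw [div_le_one hKpos]
    calc t ≤ T := htT
    _ ≤ Λ * T := le_mul_of_one_le_left (by linarith) hΛ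
  have htKpos : 0 < t / K := div_pos ht hKpos
  -- Step 1 : (t/K)^(1/β₁) ≤ s
  have hstep1 : (t / K) ^ (1/β₁) ≤ s := by
    rcases le_or_gt t 1 with h1 | h1
    · -- s ≤ 1
      have hs1 : s ≤ 1 := by
        by_contra hcon
        push_neg at hcon
        have := hψmono (Set.mem_Ioi.mpr one_pos) (Set.mem_Ioi.mpr hs) hcon
        rw [hψ1, hψs] at this
        linarith
      have h2 := hscale s 1 hs hs1
      rw [hψ1, hψs] at h2
      have h3 : (1/s) ^ β₁ ≤ Λ / t := by
        calc (1/s) ^ β₁ = Λ * (Λ⁻¹ * (1/s) ^ β₁) := by field_simp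
        _ ≤ Λ * (1 / t) := mul_le_mul_of_nonneg_left h2 hΛ0.le
        _ = Λ / t := by ring
      have h4 : 1/s ≤ (Λ/t) ^ (1/β₁) := by
        have h := Real.rpow_le_rpow (by positivity) h3 (by positivity : (0:ℝ) ≤ 1/β₁)
        have e : ((1/s:ℝ) ^ β₁) ^ (1/β₁) = 1/s := by
          rw [← Real.rpow_mul (by positivity), mul_one_div, div_self hβ0.ne', Real.rpow_one]
        rwa [e] at h
      have h5 : (t/Λ) ^ (1/β₁) ≤ s := by
        have hinv4 : ((Λ/t) ^ (1/β₁) : ℝ)⁻¹ ≤ (1/s)⁻¹ :=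
          inv_anti₀ (by positivity) h4
        calc (t/Λ) ^ (1/β₁) = ((Λ/t)⁻¹ : ℝ) ^ (1/β₁) := by rw [inv_div]
        _ = ((Λ/t) ^ (1/β₁) : ℝ)⁻¹ := Real.inv_rpow (by positivity) _
        _ ≤ (1/s)⁻¹ := hinv4
        _ = s := by rw [one_div, inv_inv]
      refine le_trans ?_ h5
      apply Real.rpow_le_rpow htKpos.le ?_ (by positivity)
      apply div_le_div_of_nonneg_left ht.le hΛ0
      exact le_mul_of_one_le_right hΛ0.le hT
    · -- 1 ≤ s
      have hs1 : 1 ≤ s := by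
        by_contra hcon
        push_neg at hcon
        have := hψmono (Set.mem_Ioi.mpr hs) (Set.mem_Ioi.mpr one_pos) hcon
        rw [hψ1, hψs] at this
        linarith
      exact le_trans (Real.rpow_le_one htKpos.le htK (by positivity)) hs1
  -- Step 2 : k * t^(1/α) ≤ s with k = K^(-(1/α))
  set k : ℝ := K ^ (-(1/α)) with hkdef
  have hk0 : 0 < k := Real.rpow_pos_of_pos hKpos _
  have hk1 : k ≤ 1 := Real.rpow_le_one_of_one_le_of_nonpos hK (neg_nonpos.mpr (by positivity))
  have hkt : k * t ^ (1/α) ≤ s := by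
    have e : (t / K) ^ (1/α) = k * t ^ (1/α) := by
      rw [hkdef, Real.div_rpow ht.le hKpos.le, Real.rpow_neg hKpos.le, div_eq_mul_inv]
      ring
    have h := Real.rpow_le_rpow_of_exponent_ge htKpos htK
      (one_div_le_one_div_of_le hα hβ.le)
    rw [e] at h
    exact h.trans hstep1
  -- main computation
  set m1 := max s r with hm1def
  set m2 := max (t ^ (1/α)) r with hm2def
  have hm1 : 0 < m1 := lt_max_of_lt_right hr
  have hm2 : 0 < m2 := lt_max_of_lt_right hr
  have hmin1 : min 1 (s / r) = s / m1 := by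
    rcases le_total s r with h | h
    · rw [hm1def, max_eq_right h, min_eq_right ((div_le_one hr).mpr h)]
    · rw [hm1def, max_eq_left h, div_self hs.ne', min_eq_left ((one_le_div hr).mpr h)]
  have hmin2 : min 1 (t ^ (1/α) / r) = t ^ (1/α) / m2 := by
    have htα : 0 < t ^ (1/α) := Real.rpow_pos_of_pos ht _
    rcases le_total (t ^ (1/α)) r with h | h
    · rw [hm2def, max_eq_right h, min_eq_right ((div_le_one hr).mpr h)]
    · rw [hm2def, max_eq_left h, div_self htα.ne', min_eq_left ((one_le_div hr).mpr h)]
  rw [hmin1, hmin2]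
  have hLHS : t ^ 2 / s ^ A * (s / m1) ^ A = t ^ 2 / m1 ^ A := by
    rw [Real.div_rpow hs.le hm1.le]
    have h0 : s ^ A ≠ 0 := (Real.rpow_pos_of_pos hs A).ne'
    field_simp
  have hRHS : K ^ (A / α) * t ^ (-((d:ℝ)/α)) * (t ^ (1/α) / m2) ^ B
      = K ^ (A / α) * (t / m2 ^ B) := by
    rw [Real.div_rpow (Real.rpow_nonneg ht.le _) hm2.le, ← Real.rpow_mul ht.le]
    rw [mul_assoc, mul_div_assoc' (t ^ (-((d:ℝ)/α))), ← Real.rpow_add ht]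
    have he : -((d:ℝ)/α) + 1/α * B = 1 := by
      rw [hB]; field_simp; ring
    rw [he, Real.rpow_one]
  rw [hLHS]
  calc t ^ 2 / m1 ^ A ≤ K ^ (A / α) * (t / m2 ^ B) := by
        rw [mul_div_assoc', div_le_div_iff₀ (Real.rpow_pos_of_pos hm1 A) (Real.rpow_pos_of_pos hm2 B)]
        have hm2α : t ≤ m2 ^ α := by
          calc t = (t ^ (1/α)) ^ α := by
                rw [← Real.rpow_mul ht.le, one_div_mul_cancel hα.ne', Real.rpow_one]
          _ ≤ m2 ^ α := Real.rpow_le_rpow (Real.rpow_nonneg ht.le _) (le_max_left _ _) hα.le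
        have hm1k : k * m2 ≤ m1 := by
          have e : k * m2 = max (k * t ^ (1/α)) (k * r) := mul_max_of_nonneg _ _ hk0.le
          rw [e]
          exact max_le_max hkt (by nlinarith)
        have hCk : K ^ (A / α) * k ^ A = 1 := by
          rw [hkdef, ← Real.rpow_mul hKpos.le, ← Real.rpow_add hKpos]
          rw [show A / α + -(1/α) * A = 0 by ring, Real.rpow_zero]
        calc t ^ 2 * m2 ^ B = t * (t * m2 ^ B) := by ring
        _ ≤ t * (m2 ^ α * m2 ^ B) := by
              apply mul_le_mul_of_nonneg_left
                (mul_le_mul_of_nonneg_right hm2α (Real.rpow_pos_of_pos hm2 B).le) ht.le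
        _ = t * m2 ^ A := by
              rw [← Real.rpow_add hm2]
              congr 1
              rw [hA, hB]; ring
        _ = (K ^ (A / α) * k ^ A) * (t * m2 ^ A) := by rw [hCk, one_mul]
        _ = K ^ (A / α) * t * (k ^ A * m2 ^ A) := by ring
        _ = K ^ (A / α) * t * (k * m2) ^ A := by rw [← Real.mul_rpow hk0.le hm2.le]
        _ ≤ K ^ (A / α) * t * m1 ^ A := by
              apply mul_le_mul_of_nonneg_left
                (Real.rpow_le_rpow (by positivity) hm1k hA0) (by positivity)
  _ = K ^ (A / α) * t ^ (-((d:ℝ)/α)) * (t ^ (1/α) / m2) ^ B := hRHS.symm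
end

section
/- Let $d \ge 1$ be an integer and assume $0 < \alpha < \beta_1$ and $d > \alpha$. Then there exists $C = C(d,\alpha,\beta_1) > 0$ such that for all $R \ge 1$ and all $w \in \mathbb{R}^d$ with $|w| \ge 2R$: $\int_{\{z : |z| \ge R\}} \frac{dz}{|w-z|^{d-\alpha}\,|z|^{\beta_1}} \le \frac{C}{R^{\beta_1 - \alpha}}$. -/
open MeasureTheory Metric Set


lemma key_ident_B (R t : ℝ) (hR : 0 < R) (d k : ℕ) :
    (R * 2 ^ k) ^ t * (R * 2 ^ (k + 1)) ^ (d : ℕ) =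
      R ^ ((d : ℝ) + t) * 2 ^ (d : ℝ) * (2 ^ ((d : ℝ) + t)) ^ k := by
  have h2 : (0:ℝ) ≤ 2 := by norm_num
  rw [← Real.rpow_natCast (R * 2 ^ (k+1)) d, ← Real.rpow_natCast (2:ℝ) k,
    ← Real.rpow_natCast (2:ℝ) (k+1), ← Real.rpow_natCast ((2:ℝ) ^ ((d:ℝ) + t)) k,
    Real.mul_rpow hR.le (Real.rpow_nonneg h2 _),
    Real.mul_rpow hR.le (Real.rpow_nonneg h2 _),
    ← Real.rpow_mul h2, ← Real.rpow_mul h2, ← Real.rpow_mul h2,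
    mul_mul_mul_comm, ← Real.rpow_add hR, mul_assoc, ← Real.rpow_add (by norm_num : (0:ℝ) < 2),
    ← Real.rpow_add (by norm_num : (0:ℝ) < 2)]
  congr 1
  · ring
  · push_cast; ring

lemma lintB (d : ℕ) (hd : 1 ≤ d) (t : ℝ) (ht : (d : ℝ) + t < 0) (R : ℝ) (hR : 0 < R) :
    ∫⁻ z in {z : EuclideanSpace ℝ (Fin d) | R ≤ ‖z‖}, ENNReal.ofReal (‖z‖ ^ t)
      ≤ ENNReal.ofReal (R ^ ((d : ℝ) + t) * 2 ^ (d : ℝ))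
          * volume (ball (0 : EuclideanSpace ℝ (Fin d)) 1)
          * (1 - ENNReal.ofReal (2 ^ ((d : ℝ) + t)))⁻¹ := by
  classical
  haveI : Nonempty (Fin d) := ⟨⟨0, hd⟩⟩
  set E := EuclideanSpace ℝ (Fin d)
  set B := volume (ball (0 : E) 1) with hB
  have ht0 : t ≤ 0 := by
    have : (1:ℝ) ≤ d := by exact_mod_cast hd
    linarith
  set S : ℕ → Set E := fun k => (fun z : E => ‖z‖) ⁻¹' Ico (R * 2 ^ k) (R * 2 ^ (k + 1)) with hS
  have hcover : {z : E | R ≤ ‖z‖} ⊆ ⋃ k, S k := by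
    intro z hz
    have hz' : R ≤ ‖z‖ := hz
    have hex : ∃ k : ℕ, ‖z‖ < R * 2 ^ (k + 1) := by
      obtain ⟨n, hn⟩ := pow_unbounded_of_one_lt (‖z‖ / R) (one_lt_two (α := ℝ))
      refine ⟨n, ?_⟩
      rw [div_lt_iff₀ hR] at hn
      have : (2:ℝ) ^ n ≤ 2 ^ (n + 1) := by
        apply pow_le_pow_right₀ (by norm_num) (Nat.le_succ n)
      nlinarith
    refine mem_iUnion.2 ⟨Nat.find hex, ?_, Nat.find_spec hex⟩
    rcases Nat.eq_zero_or_pos (Nat.find hex) with h0 | hpos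
    · rw [h0]; simpa using hz'
    · obtain ⟨m, hm⟩ := Nat.exists_eq_succ_of_ne_zero hpos.ne'
      have := Nat.find_min hex (m := m) (by omega)
      rw [hm]
      push_neg at this
      simpa using this
  have hmeas : ∀ k, MeasurableSet (S k) := fun k => measurable_norm measurableSet_Ico
  have hstep : ∀ k : ℕ, ∫⁻ z in S k, ENNReal.ofReal (‖z‖ ^ t)
      ≤ (ENNReal.ofReal (R ^ ((d:ℝ) + t) * 2 ^ (d:ℝ)) * B) * ENNReal.ofReal (2 ^ ((d:ℝ) + t)) ^ k := by
    intro k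
    have hRk : (0:ℝ) < R * 2 ^ k := by positivity
    calc ∫⁻ z in S k, ENNReal.ofReal (‖z‖ ^ t)
        ≤ ∫⁻ _ in S k, ENNReal.ofReal ((R * 2 ^ k) ^ t) := by
          refine setLIntegral_mono' (hmeas k) fun z hz => ?_
          exact ENNReal.ofReal_le_ofReal
            (Real.rpow_le_rpow_of_nonpos hRk hz.1 ht0)
      _ = ENNReal.ofReal ((R * 2 ^ k) ^ t) * volume (S k) := setLIntegral_const _ _
      _ ≤ ENNReal.ofReal ((R * 2 ^ k) ^ t) * volume (ball (0 : E) (R * 2 ^ (k + 1))) := by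
          refine mul_le_mul_right (measure_mono fun z hz => ?_) _
          simp only [mem_ball, dist_zero_right]
          exact hz.2
      _ = ENNReal.ofReal ((R * 2 ^ k) ^ t) * (ENNReal.ofReal ((R * 2 ^ (k + 1)) ^ (d : ℕ)) * B) := by
          rw [Measure.addHaar_ball _ _ (by positivity), finrank_euclideanSpace_fin]
      _ = ENNReal.ofReal ((R * 2 ^ k) ^ t * (R * 2 ^ (k + 1)) ^ (d : ℕ)) * B := by
          rw [ENNReal.ofReal_mul (Real.rpow_nonneg hRk.le _), mul_assoc]
      _ = (ENNReal.ofReal (R ^ ((d:ℝ) + t) * 2 ^ (d:ℝ)) * B) * ENNReal.ofReal (2 ^ ((d:ℝ) + t)) ^ k := by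
          rw [key_ident_B R t hR d k, ENNReal.ofReal_mul (by positivity),
            ENNReal.ofReal_pow (Real.rpow_nonneg (by norm_num) _)]
          ring
  calc ∫⁻ z in {z : E | R ≤ ‖z‖}, ENNReal.ofReal (‖z‖ ^ t)
      ≤ ∫⁻ z in ⋃ k, S k, ENNReal.ofReal (‖z‖ ^ t) := lintegral_mono_set hcover
    _ ≤ ∑' k, ∫⁻ z in S k, ENNReal.ofReal (‖z‖ ^ t) := lintegral_iUnion_le _ _
    _ ≤ ∑' k, (ENNReal.ofReal (R ^ ((d:ℝ) + t) * 2 ^ (d:ℝ)) * B) * ENNReal.ofReal (2 ^ ((d:ℝ) + t)) ^ k :=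
        ENNReal.tsum_le_tsum hstep
    _ = (ENNReal.ofReal (R ^ ((d:ℝ) + t) * 2 ^ (d:ℝ)) * B) * ∑' k, ENNReal.ofReal (2 ^ ((d:ℝ) + t)) ^ k :=
        ENNReal.tsum_mul_left
    _ = _ := by rw [ENNReal.tsum_geometric]

lemma key_ident_A (ρ t : ℝ) (hρ : 0 < ρ) (d k : ℕ) :
    (ρ / 2 ^ (k + 1)) ^ t * (ρ / 2 ^ k) ^ (d : ℕ) =
      ρ ^ ((d : ℝ) + t) * 2 ^ (-t) * (2 ^ (-((d : ℝ) + t))) ^ k := by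
  have h2 : (0:ℝ) ≤ 2 := by norm_num
  have h2' : (0:ℝ) < 2 := by norm_num
  have e1 : ρ / 2 ^ (k + 1) = ρ * 2 ^ (-(((k : ℕ) + 1 : ℕ) : ℝ)) := by
    rw [Real.rpow_neg h2, Real.rpow_natCast, div_eq_mul_inv]
  have e2 : ρ / 2 ^ k = ρ * 2 ^ (-((k : ℕ) : ℝ)) := by
    rw [Real.rpow_neg h2, Real.rpow_natCast, div_eq_mul_inv]
  rw [e1, e2, ← Real.rpow_natCast (ρ * 2 ^ (-((k:ℕ):ℝ))) d,
    ← Real.rpow_natCast ((2:ℝ) ^ (-((d:ℝ) + t))) k,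
    Real.mul_rpow hρ.le (Real.rpow_nonneg h2 _),
    Real.mul_rpow hρ.le (Real.rpow_nonneg h2 _),
    ← Real.rpow_mul h2, ← Real.rpow_mul h2, ← Real.rpow_mul h2,
    mul_mul_mul_comm, ← Real.rpow_add hρ, mul_assoc, ← Real.rpow_add h2',
    ← Real.rpow_add h2']
  congr 1
  · ring
  · push_cast; ring

lemma lintA (d : ℕ) (hd : 1 ≤ d) (t : ℝ) (ht0 : t ≤ 0) (ht : 0 < (d : ℝ) + t)
    (w : (EuclideanSpace ℝ (Fin d))) (ρ : ℝ) (hρ : 0 < ρ) :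
    ∫⁻ z in {z : (EuclideanSpace ℝ (Fin d)) | ‖w - z‖ < ρ}, ENNReal.ofReal (‖w - z‖ ^ t)
      ≤ ENNReal.ofReal (ρ ^ ((d : ℝ) + t) * 2 ^ (-t))
          * volume (ball (0 : (EuclideanSpace ℝ (Fin d))) 1)
          * (1 - ENNReal.ofReal (2 ^ (-((d : ℝ) + t))))⁻¹ := by
  classical
  haveI : Nonempty (Fin d) := ⟨⟨0, hd⟩⟩
  set B := volume (ball (0 : (EuclideanSpace ℝ (Fin d))) 1) with hB
  set S : ℕ → Set (EuclideanSpace ℝ (Fin d)) := fun k => (fun z : (EuclideanSpace ℝ (Fin d)) => ‖w - z‖) ⁻¹' Ico (ρ / 2 ^ (k + 1)) (ρ / 2 ^ k)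
    with hS
  have hcover : {z : (EuclideanSpace ℝ (Fin d)) | ‖w - z‖ < ρ} ⊆ {w} ∪ ⋃ k, S k := by
    intro z hz
    rcases eq_or_ne z w with rfl | hzw
    · exact Or.inl rfl
    right
    have hu : (0:ℝ) < ‖w - z‖ := by
      rw [norm_pos_iff]
      exact sub_ne_zero.2 (Ne.symm hzw)
    have hex : ∃ k : ℕ, ρ / 2 ^ (k + 1) ≤ ‖w - z‖ := by
      obtain ⟨n, hn⟩ := pow_unbounded_of_one_lt (ρ / ‖w - z‖) (one_lt_two (α := ℝ))
      refine ⟨n, ?_⟩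
      rw [div_lt_iff₀ hu] at hn
      rw [div_le_iff₀ (by positivity)]
      have : (2:ℝ) ^ n ≤ 2 ^ (n + 1) := by
        apply pow_le_pow_right₀ (by norm_num) (Nat.le_succ n)
      nlinarith
    refine mem_iUnion.2 ⟨Nat.find hex, Nat.find_spec hex, ?_⟩
    rcases Nat.eq_zero_or_pos (Nat.find hex) with h0 | hpos
    · rw [h0]; simpa using (hz : ‖w - z‖ < ρ)
    · obtain ⟨m, hm⟩ := Nat.exists_eq_succ_of_ne_zero hpos.ne'
      have := Nat.find_min hex (m := m) (by omega)
      push_neg at this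
      rw [hm]
      exact this
  have hmeas : ∀ k, MeasurableSet (S k) :=
    fun k => (measurable_const.sub measurable_id).norm measurableSet_Ico
  have hstep : ∀ k : ℕ, ∫⁻ z in S k, ENNReal.ofReal (‖w - z‖ ^ t)
      ≤ (ENNReal.ofReal (ρ ^ ((d:ℝ) + t) * 2 ^ (-t)) * B)
          * ENNReal.ofReal (2 ^ (-((d:ℝ) + t))) ^ k := by
    intro k
    have hρk : (0:ℝ) < ρ / 2 ^ (k + 1) := by positivity
    calc ∫⁻ z in S k, ENNReal.ofReal (‖w - z‖ ^ t)
        ≤ ∫⁻ _ in S k, ENNReal.ofReal ((ρ / 2 ^ (k + 1)) ^ t) := by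
          refine setLIntegral_mono' (hmeas k) fun z hz => ?_
          exact ENNReal.ofReal_le_ofReal
            (Real.rpow_le_rpow_of_nonpos hρk hz.1 ht0)
      _ = ENNReal.ofReal ((ρ / 2 ^ (k + 1)) ^ t) * volume (S k) := setLIntegral_const _ _
      _ ≤ ENNReal.ofReal ((ρ / 2 ^ (k + 1)) ^ t) * volume (ball w (ρ / 2 ^ k)) := by
          refine mul_le_mul_right (measure_mono fun z hz => ?_) _
          have : dist z w = ‖w - z‖ := by rw [dist_eq_norm, norm_sub_rev]
          simp only [mem_ball, this]
          exact hz.2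
      _ = ENNReal.ofReal ((ρ / 2 ^ (k + 1)) ^ t) * (ENNReal.ofReal ((ρ / 2 ^ k) ^ (d : ℕ)) * B) := by
          rw [Measure.addHaar_ball _ _ (by positivity : (0:ℝ) ≤ ρ / 2 ^ k),
            finrank_euclideanSpace_fin]
      _ = ENNReal.ofReal ((ρ / 2 ^ (k + 1)) ^ t * (ρ / 2 ^ k) ^ (d : ℕ)) * B := by
          rw [ENNReal.ofReal_mul (Real.rpow_nonneg hρk.le _), mul_assoc]
      _ = (ENNReal.ofReal (ρ ^ ((d:ℝ) + t) * 2 ^ (-t)) * B)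
            * ENNReal.ofReal (2 ^ (-((d:ℝ) + t))) ^ k := by
          rw [key_ident_A ρ t hρ d k, ENNReal.ofReal_mul (by positivity),
            ENNReal.ofReal_pow (Real.rpow_nonneg (by norm_num) _)]
          ring
  calc ∫⁻ z in {z : (EuclideanSpace ℝ (Fin d)) | ‖w - z‖ < ρ}, ENNReal.ofReal (‖w - z‖ ^ t)
      ≤ ∫⁻ z in {w} ∪ ⋃ k, S k, ENNReal.ofReal (‖w - z‖ ^ t) := lintegral_mono_set hcover
    _ ≤ (∫⁻ z in {w}, ENNReal.ofReal (‖w - z‖ ^ t))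
          + ∫⁻ z in ⋃ k, S k, ENNReal.ofReal (‖w - z‖ ^ t) := lintegral_union_le _ _ _
    _ = ∫⁻ z in ⋃ k, S k, ENNReal.ofReal (‖w - z‖ ^ t) := by
          rw [setLIntegral_measure_zero _ _ (measure_singleton w), zero_add]
    _ ≤ ∑' k, ∫⁻ z in S k, ENNReal.ofReal (‖w - z‖ ^ t) := lintegral_iUnion_le _ _
    _ ≤ ∑' k, (ENNReal.ofReal (ρ ^ ((d:ℝ) + t) * 2 ^ (-t)) * B)
          * ENNReal.ofReal (2 ^ (-((d:ℝ) + t))) ^ k := ENNReal.tsum_le_tsum hstep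
    _ = (ENNReal.ofReal (ρ ^ ((d:ℝ) + t) * 2 ^ (-t)) * B)
          * ∑' k, ENNReal.ofReal (2 ^ (-((d:ℝ) + t))) ^ k := ENNReal.tsum_mul_left
    _ = _ := by rw [ENNReal.tsum_geometric]


theorem stmt_14 (d : ℕ) (hd : 1 ≤ d) (α β₁ : ℝ) (hα : 0 < α) (hαd : α < (d : ℝ))
    (hβ : α < β₁) :
    ∃ C > 0, ∀ R : ℝ, 1 ≤ R → ∀ w : EuclideanSpace ℝ (Fin d), 2 * R ≤ ‖w‖ →
      (∫ z in {z : EuclideanSpace ℝ (Fin d) | R ≤ ‖z‖},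
          1 / (‖w - z‖ ^ ((d : ℝ) - α) * ‖z‖ ^ β₁))
        ≤ C / R ^ (β₁ - α) := by
  classical
  haveI : Nonempty (Fin d) := ⟨⟨0, hd⟩⟩
  set B := volume (ball (0 : EuclideanSpace ℝ (Fin d)) 1) with hBdef
  set IA : ENNReal := (1 - ENNReal.ofReal (2 ^ (-α)))⁻¹ with hIA
  set IB : ENNReal := (1 - ENNReal.ofReal (2 ^ (α - β₁)))⁻¹ with hIB
  set K : ENNReal := ENNReal.ofReal (2 ^ ((d:ℝ) - α)) * B * IA
      + ENNReal.ofReal (4 ^ ((d:ℝ) - α)) * (ENNReal.ofReal (2 ^ (d:ℝ)) * B * IB) with hK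
  have hBne : B ≠ ⊤ := measure_ball_lt_top.ne
  have hIAne : IA ≠ ⊤ := by
    rw [hIA, ENNReal.inv_ne_top]
    have : ENNReal.ofReal (2 ^ (-α)) < 1 :=
      ENNReal.ofReal_lt_one.2 (Real.rpow_lt_one_of_one_lt_of_neg one_lt_two (by linarith))
    exact (tsub_pos_of_lt this).ne'
  have hIBne : IB ≠ ⊤ := by
    rw [hIB, ENNReal.inv_ne_top]
    have : ENNReal.ofReal (2 ^ (α - β₁)) < 1 :=
      ENNReal.ofReal_lt_one.2 (Real.rpow_lt_one_of_one_lt_of_neg one_lt_two (by linarith))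
    exact (tsub_pos_of_lt this).ne'
  have hKne : K ≠ ⊤ := by
    rw [hK]
    exact ENNReal.add_ne_top.2
      ⟨ENNReal.mul_ne_top (ENNReal.mul_ne_top ENNReal.ofReal_ne_top hBne) hIAne,
       ENNReal.mul_ne_top ENNReal.ofReal_ne_top
        (ENNReal.mul_ne_top (ENNReal.mul_ne_top ENNReal.ofReal_ne_top hBne) hIBne)⟩
  refine ⟨K.toReal + 1, by positivity, ?_⟩
  intro R hR w hw
  have hR0 : (0:ℝ) < R := by linarith
  set ρ : ℝ := ‖w‖ / 2 with hρdef
  have hρR : R ≤ ρ := by rw [hρdef]; linarith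
  have hρ : (0:ℝ) < ρ := lt_of_lt_of_le hR0 hρR
  have hw2 : ‖w‖ = 2 * ρ := by rw [hρdef]; ring
  set S : Set (EuclideanSpace ℝ (Fin d)) := {z | R ≤ ‖z‖} with hSdef
  set ball' : Set (EuclideanSpace ℝ (Fin d)) := {z | ‖w - z‖ < ρ} with hball'
  have hSm : MeasurableSet S := measurable_norm measurableSet_Ici
  have hbm : MeasurableSet ball' :=
    (measurable_const.sub measurable_id).norm measurableSet_Iio
  set f : EuclideanSpace ℝ (Fin d) → ℝ :=
    fun z => 1 / (‖w - z‖ ^ ((d : ℝ) - α) * ‖z‖ ^ β₁) with hfdef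
  have hfm : Measurable f := by
    apply measurable_const.div
    exact (((measurable_const.sub measurable_id).norm.pow measurable_const).mul
      (measurable_norm.pow measurable_const))
  have hfnn : ∀ z, 0 ≤ f z := fun z => by
    rw [hfdef]
    positivity
  -- pointwise bound on S ∩ ball'
  have P1 : ∀ z ∈ S ∩ ball', ENNReal.ofReal (f z)
      ≤ ENNReal.ofReal (ρ ^ (-β₁) * ‖w - z‖ ^ (α - (d:ℝ))) := by
    rintro z ⟨hz1, hz2⟩
    apply ENNReal.ofReal_le_ofReal
    have hz2' : ‖w - z‖ < ρ := hz2
    have hv : ρ < ‖z‖ := by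
      have h := norm_sub_norm_le w z
      nlinarith [hz2', hw2, h]
    rcases eq_or_lt_of_le (norm_nonneg (w - z)) with h0 | hu
    · rw [hfdef]
      simp only
      rw [← h0, Real.zero_rpow (by intro h; apply absurd h; intro h'; nlinarith : (d:ℝ) - α ≠ 0),
        Real.zero_rpow (by intro h; nlinarith [h] : α - (d:ℝ) ≠ 0), zero_mul, div_zero, mul_zero]
    · have h1 : f z = ‖w - z‖ ^ (α - (d:ℝ)) * ‖z‖ ^ (-β₁) := by
        rw [hfdef]
        simp only
        rw [one_div, mul_inv, ← Real.rpow_neg (norm_nonneg _), ← Real.rpow_neg (norm_nonneg _),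
          neg_sub]
      rw [h1, mul_comm]
      exact mul_le_mul_of_nonneg_right
        (Real.rpow_le_rpow_of_nonpos hρ hv.le (by linarith))
        (Real.rpow_nonneg (norm_nonneg _) _)
  -- pointwise bound on S ∩ ball'ᶜ
  have P2 : ∀ z ∈ S ∩ ball'ᶜ, ENNReal.ofReal (f z)
      ≤ ENNReal.ofReal (4 ^ ((d:ℝ) - α) * ‖z‖ ^ (α - (d:ℝ) - β₁)) := by
    rintro z ⟨hz1, hz2⟩
    apply ENNReal.ofReal_le_ofReal
    have hu : ρ ≤ ‖w - z‖ := not_lt.1 hz2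
    have hz1' : R ≤ ‖z‖ := hz1
    have hv : (0:ℝ) < ‖z‖ := lt_of_lt_of_le hR0 hz1'
    have hupos : (0:ℝ) < ‖w - z‖ := lt_of_lt_of_le hρ hu
    have h4 : ‖z‖ / 4 ≤ ‖w - z‖ := by
      rcases le_or_gt ‖z‖ (2 * ‖w‖) with h | h
      · nlinarith
      · have h5 := norm_sub_norm_le z w
        rw [norm_sub_rev z w] at h5
        nlinarith
    have key : (‖z‖ / 4) ^ ((d:ℝ) - α) ≤ ‖w - z‖ ^ ((d:ℝ) - α) :=
      Real.rpow_le_rpow (by positivity) h4 (by linarith)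
    have hden : (0:ℝ) < (‖z‖ / 4) ^ ((d:ℝ) - α) * ‖z‖ ^ β₁ := by positivity
    calc f z ≤ 1 / ((‖z‖ / 4) ^ ((d:ℝ) - α) * ‖z‖ ^ β₁) := by
          rw [hfdef]
          exact one_div_le_one_div_of_le hden
            (mul_le_mul_of_nonneg_right key (Real.rpow_nonneg (norm_nonneg _) _))
      _ = 4 ^ ((d:ℝ) - α) * ‖z‖ ^ (α - (d:ℝ) - β₁) := by
          rw [Real.div_rpow hv.le (by norm_num : (0:ℝ) ≤ 4), div_mul_eq_mul_div,
            ← Real.rpow_add hv, one_div_div, div_eq_mul_inv,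
            ← Real.rpow_neg hv.le, show -((d:ℝ) - α + β₁) = α - (d:ℝ) - β₁ by ring,
            mul_comm]
  -- main lintegral bound
  have LB : ∫⁻ z in S, ENNReal.ofReal (f z) ≤ K * ENNReal.ofReal (R ^ (α - β₁)) := by
    have hsplit : S ⊆ (S ∩ ball') ∪ (S ∩ ball'ᶜ) := by
      intro z hz
      by_cases h : z ∈ ball'
      · exact Or.inl ⟨hz, h⟩
      · exact Or.inr ⟨hz, h⟩
    have T1 : ∫⁻ z in S ∩ ball', ENNReal.ofReal (f z)
        ≤ ENNReal.ofReal (R ^ (α - β₁)) * (ENNReal.ofReal (2 ^ ((d:ℝ) - α)) * B * IA) := by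
      have step1 : ∫⁻ z in S ∩ ball', ENNReal.ofReal (f z)
          ≤ ∫⁻ z in ball', ENNReal.ofReal (ρ ^ (-β₁) * ‖w - z‖ ^ (α - (d:ℝ))) :=
        le_trans (setLIntegral_mono' (hSm.inter hbm) P1) (lintegral_mono_set inter_subset_right)
      have step2 : ∫⁻ z in ball', ENNReal.ofReal (ρ ^ (-β₁) * ‖w - z‖ ^ (α - (d:ℝ)))
          = ENNReal.ofReal (ρ ^ (-β₁)) * ∫⁻ z in ball', ENNReal.ofReal (‖w - z‖ ^ (α - (d:ℝ))) := by
        simp_rw [ENNReal.ofReal_mul (Real.rpow_nonneg hρ.le (-β₁))]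
        exact lintegral_const_mul' _ _ ENNReal.ofReal_ne_top
      have step3 := lintA d hd (α - (d:ℝ)) (by linarith) (by push_cast; linarith) w ρ hρ
      rw [show (d:ℝ) + (α - (d:ℝ)) = α by ring, show -(α - (d:ℝ)) = (d:ℝ) - α by ring] at step3
      calc ∫⁻ z in S ∩ ball', ENNReal.ofReal (f z)
          ≤ ENNReal.ofReal (ρ ^ (-β₁))
              * (ENNReal.ofReal (ρ ^ α * 2 ^ ((d:ℝ) - α)) * B * IA) := by
            refine le_trans step1 ?_
            rw [step2, hBdef, hIA]
            exact mul_le_mul_right step3 _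
        _ = ENNReal.ofReal (ρ ^ (α - β₁)) * (ENNReal.ofReal (2 ^ ((d:ℝ) - α)) * B * IA) := by
            rw [ENNReal.ofReal_mul (Real.rpow_nonneg hρ.le α),
              ← mul_assoc, ← mul_assoc, ← mul_assoc, ← ENNReal.ofReal_mul
                (Real.rpow_nonneg hρ.le (-β₁)),
              ← Real.rpow_add hρ, show -β₁ + α = α - β₁ by ring]
            ring
        _ ≤ ENNReal.ofReal (R ^ (α - β₁)) * (ENNReal.ofReal (2 ^ ((d:ℝ) - α)) * B * IA) := by
            refine mul_le_mul_left (ENNReal.ofReal_le_ofReal ?_) _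
            exact Real.rpow_le_rpow_of_nonpos hR0 hρR (by linarith)
    have T2 : ∫⁻ z in S ∩ ball'ᶜ, ENNReal.ofReal (f z)
        ≤ ENNReal.ofReal (4 ^ ((d:ℝ) - α)) * (ENNReal.ofReal (2 ^ (d:ℝ)) * B * IB)
            * ENNReal.ofReal (R ^ (α - β₁)) := by
      have step1 : ∫⁻ z in S ∩ ball'ᶜ, ENNReal.ofReal (f z)
          ≤ ∫⁻ z in S, ENNReal.ofReal (4 ^ ((d:ℝ) - α) * ‖z‖ ^ (α - (d:ℝ) - β₁)) :=
        le_trans (setLIntegral_mono' (hSm.inter hbm.compl) P2)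
          (lintegral_mono_set inter_subset_left)
      have step2 : ∫⁻ z in S, ENNReal.ofReal (4 ^ ((d:ℝ) - α) * ‖z‖ ^ (α - (d:ℝ) - β₁))
          = ENNReal.ofReal (4 ^ ((d:ℝ) - α))
              * ∫⁻ z in S, ENNReal.ofReal (‖z‖ ^ (α - (d:ℝ) - β₁)) := by
        simp_rw [ENNReal.ofReal_mul (Real.rpow_nonneg (by norm_num : (0:ℝ) ≤ 4) _)]
        exact lintegral_const_mul' _ _ ENNReal.ofReal_ne_top
      have step3 := lintB d hd (α - (d:ℝ) - β₁) (by push_cast; linarith) R hR0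
      rw [show (d:ℝ) + (α - (d:ℝ) - β₁) = α - β₁ by ring] at step3
      calc ∫⁻ z in S ∩ ball'ᶜ, ENNReal.ofReal (f z)
          ≤ ENNReal.ofReal (4 ^ ((d:ℝ) - α))
              * (ENNReal.ofReal (R ^ (α - β₁) * 2 ^ (d:ℝ)) * B * IB) := by
            refine le_trans step1 ?_
            rw [step2]
            exact mul_le_mul_right step3 _
        _ = ENNReal.ofReal (4 ^ ((d:ℝ) - α)) * (ENNReal.ofReal (2 ^ (d:ℝ)) * B * IB)
              * ENNReal.ofReal (R ^ (α - β₁)) := by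
            rw [ENNReal.ofReal_mul (Real.rpow_nonneg hR0.le _)]
            ring
    calc ∫⁻ z in S, ENNReal.ofReal (f z)
        ≤ ∫⁻ z in (S ∩ ball') ∪ (S ∩ ball'ᶜ), ENNReal.ofReal (f z) :=
          lintegral_mono_set hsplit
      _ ≤ (∫⁻ z in S ∩ ball', ENNReal.ofReal (f z))
            + ∫⁻ z in S ∩ ball'ᶜ, ENNReal.ofReal (f z) := lintegral_union_le _ _ _
      _ ≤ ENNReal.ofReal (R ^ (α - β₁)) * (ENNReal.ofReal (2 ^ ((d:ℝ) - α)) * B * IA)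
            + ENNReal.ofReal (4 ^ ((d:ℝ) - α)) * (ENNReal.ofReal (2 ^ (d:ℝ)) * B * IB)
              * ENNReal.ofReal (R ^ (α - β₁)) := add_le_add T1 T2
      _ = K * ENNReal.ofReal (R ^ (α - β₁)) := by rw [hK]; ring
  -- conclude
  have heq : (∫ z in S, f z) = (∫⁻ z in S, ENNReal.ofReal (f z)).toReal :=
    integral_eq_lintegral_of_nonneg_ae (ae_of_all _ hfnn) hfm.aestronglyMeasurable
  rw [hfdef] at heq
  simp only at heq
  rw [heq]
  have h1 : (∫⁻ z in S, ENNReal.ofReal (f z)).toReal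
      ≤ (K * ENNReal.ofReal (R ^ (α - β₁))).toReal :=
    ENNReal.toReal_mono (ENNReal.mul_ne_top hKne ENNReal.ofReal_ne_top) LB
  have h2 : (K * ENNReal.ofReal (R ^ (α - β₁))).toReal = K.toReal * R ^ (α - β₁) := by
    rw [ENNReal.toReal_mul, ENNReal.toReal_ofReal (Real.rpow_nonneg hR0.le _)]
  have h3 : K.toReal * R ^ (α - β₁) ≤ (K.toReal + 1) * R ^ (α - β₁) :=
    mul_le_mul_of_nonneg_right (by linarith) (Real.rpow_nonneg hR0.le _)
  have h4 : (K.toReal + 1) * R ^ (α - β₁) = (K.toReal + 1) / R ^ (β₁ - α) := by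
    rw [show α - β₁ = -(β₁ - α) by ring, Real.rpow_neg hR0.le, div_eq_mul_inv]
  calc (∫⁻ z in S, ENNReal.ofReal (f z)).toReal
      ≤ K.toReal * R ^ (α - β₁) := by rw [← h2]; exact h1
    _ ≤ (K.toReal + 1) * R ^ (α - β₁) := h3
    _ = (K.toReal + 1) / R ^ (β₁ - α) := h4
end

section
/- Let $\alpha \in (1,2)$, $\beta_1 > \alpha$, $\Lambda \ge 1$, $d = 1$. Define $h_R(s,z) = 1 \wedge \frac{|z|^{\alpha-1}}{s^{(\alpha-1)/\alpha}}$ for $s > 0$ and $z \in \mathbb{R}$ with $|z| \ge R$, where $R \ge 1$. Suppose $\kappa$ satisfies $0 \le \kappa(z) \le \Lambda^2 |z|^{-\beta_1}$ for $|z| \ge R$. Then there exists $C = C(\alpha,\beta_1,\Lambda) > 0$ independent of $R$ such that for all $t \ge R^\alpha$ and all $v$ with $|v| \ge 2R$: $\int_0^{t}\int_{\{|z| \ge R\}} h_R(s,v)\, h_R(s,z)\, h_R(t,z)\, \kappa(z)\, dz\, ds \le \frac{C\, t^{1/\alpha}\, h_R(t,v)}{R^{\beta_1 - \alpha}}$.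 -/
open MeasureTheory Set

lemma abs_rpow_helper (R p : ℝ) (hR : 0 < R) (hp : p < -1) :
    IntegrableOn (fun z : ℝ => |z| ^ p) {z : ℝ | R ≤ |z|} ∧
    ∫ z in {z : ℝ | R ≤ |z|}, |z| ^ p = 2 * (-R ^ (p + 1) / (p + 1)) := by
  have hSet : {z : ℝ | R ≤ |z|} = Iic (-R) ∪ Ici R := by
    ext z
    simp only [mem_setOf_eq, mem_union, mem_Iic, mem_Ici, le_abs]
    constructor
    · rintro (h | h); · right; exact h
      · left; linarith
    · rintro (h | h); · right; linarith
      · left; exact h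
  have hIoi : IntegrableOn (fun z : ℝ => |z| ^ p) (Ioi R) := by
    refine (integrableOn_Ioi_rpow_of_lt hp hR).congr_fun (fun x hx => ?_) measurableSet_Ioi
    rw [abs_of_pos (hR.trans hx)]
  have hIci : IntegrableOn (fun z : ℝ => |z| ^ p) (Ici R) :=
    (integrableOn_Ici_iff_integrableOn_Ioi).mpr hIoi
  have hIic : IntegrableOn (fun z : ℝ => |z| ^ p) (Iic (-R)) := by
    rw [← Measure.map_neg_eq_self (volume : Measure ℝ)]
    have m : MeasurableEmbedding fun x : ℝ => -x := (Homeomorph.neg ℝ).measurableEmbedding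
    rw [m.integrableOn_map_iff]
    simp_rw [Function.comp_def, abs_neg, neg_preimage, neg_Iic, neg_neg]
    exact hIci
  have hdisj : Disjoint (Iic (-R)) (Ici R) := by
    rw [Set.disjoint_left]
    intro a ha ha'
    simp only [mem_Iic, mem_Ici] at ha ha'
    linarith
  have hval : ∫ z in Ioi R, |z| ^ p = -R ^ (p + 1) / (p + 1) := by
    rw [setIntegral_congr_fun measurableSet_Ioi
      (fun x hx => by simp only []; rw [abs_of_pos (hR.trans hx)] :
        EqOn (fun z : ℝ => |z| ^ p) (fun z => z ^ p) (Ioi R))]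
    exact integral_Ioi_rpow_of_lt hp hR
  constructor
  · rw [hSet]; exact hIic.union hIci
  · rw [hSet, setIntegral_union hdisj measurableSet_Ici hIic hIci]
    have h1 : ∫ z in Iic (-R), |z| ^ p = ∫ z in Ioi R, |z| ^ p := by
      have := integral_comp_neg_Iic (-R) (fun x : ℝ => |x| ^ p)
      simp only [abs_neg, neg_neg] at this
      exact this
    rw [h1, integral_Ici_eq_integral_Ioi, hval]
    ring

theorem stmt_15 (α β₁ Λ : ℝ) (hα1 : 1 < α) (hα2 : α < 2) (hβ : α < β₁) (hΛ : 1 ≤ Λ)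
    (h : ℝ → ℝ → ℝ)
    (hh : ∀ s > 0, ∀ z : ℝ, h s z = min 1 (|z| ^ (α - 1) / s ^ ((α - 1) / α))) :
    ∃ C > 0, ∀ R : ℝ, 1 ≤ R → ∀ κ : ℝ → ℝ,
      (∀ z : ℝ, R ≤ |z| → 0 ≤ κ z ∧ κ z ≤ Λ ^ 2 * |z| ^ (-β₁)) →
      ∀ t : ℝ, R ^ α ≤ t → ∀ v : ℝ, 2 * R ≤ |v| →
        (∫ s in Set.Ioc (0:ℝ) t, ∫ z in {z : ℝ | R ≤ |z|},
            h s v * h s z * h t z * κ z)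
          ≤ C * t ^ (1/α) * h t v / R ^ (β₁ - α) := by
  have hα0 : (0:ℝ) < α := by linarith
  set γ : ℝ := (α - 1) / α with hγdef
  have hγ0 : 0 < γ := div_pos (by linarith) hα0
  have hγ1 : γ < 1 := (div_lt_one hα0).mpr (by linarith)
  have hΛ0 : (0:ℝ) < Λ := by linarith
  refine ⟨2 * α * Λ ^ 2 / (β₁ - α), div_pos (by nlinarith) (by linarith), ?_⟩
  intro R hR κ hκ t ht v hv
  have hR0 : (0:ℝ) < R := by linarith
  have ht0 : (0:ℝ) < t :=
    lt_of_lt_of_le (lt_of_lt_of_le one_pos (Real.one_le_rpow hR hα0.le)) ht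
  -- basic facts about h
  have h_nonneg : ∀ s : ℝ, 0 < s → ∀ z : ℝ, 0 ≤ h s z := by
    intro s hs z
    rw [hh s hs z]
    exact le_min zero_le_one (div_nonneg (Real.rpow_nonneg (abs_nonneg z) _)
      (Real.rpow_nonneg hs.le _))
  have h_le_one : ∀ s : ℝ, 0 < s → ∀ z : ℝ, h s z ≤ 1 := by
    intro s hs z; rw [hh s hs z]; exact min_le_left _ _
  have h_le_pow : ∀ z : ℝ, h t z ≤ |z| ^ (α - 1) / t ^ γ := by
    intro z; rw [hh t ht0 z]; exact min_le_right _ _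
  have h_mono : ∀ s : ℝ, 0 < s → s ≤ t → h s v ≤ t ^ γ / s ^ γ * h t v := by
    intro s hs hst
    have hsγ : (0:ℝ) < s ^ γ := Real.rpow_pos_of_pos hs γ
    have htγ : (0:ℝ) < t ^ γ := Real.rpow_pos_of_pos ht0 γ
    rcases le_or_gt (t ^ γ) (|v| ^ (α - 1)) with hc | hc
    · have htv : h t v = 1 := by
        rw [hh t ht0 v, min_eq_left ((one_le_div htγ).mpr hc)]
      rw [htv, mul_one]
      refine (h_le_one s hs v).trans ?_
      rw [le_div_iff₀ hsγ, one_mul]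
      exact Real.rpow_le_rpow hs.le hst hγ0.le
    · have htv : h t v = |v| ^ (α - 1) / t ^ γ := by
        rw [hh t ht0 v, min_eq_right (by rw [div_le_one htγ]; exact hc.le)]
      rw [htv, hh s hs v]
      calc min 1 (|v| ^ (α - 1) / s ^ γ) ≤ |v| ^ (α - 1) / s ^ γ := min_le_right _ _
        _ = t ^ γ / s ^ γ * (|v| ^ (α - 1) / t ^ γ) := by field_simp
  -- the set and its measurability
  have hSmeas : MeasurableSet {z : ℝ | R ≤ |z|} :=
    measurableSet_le measurable_const continuous_abs.measurable
  set p : ℝ := α - 1 - β₁ with hpdef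
  have hp : p < -1 := by simp only [hpdef]; linarith
  obtain ⟨hInt, hVal⟩ := abs_rpow_helper R p hR0 hp
  set I : ℝ := 2 * (-R ^ (p + 1) / (p + 1)) with hIdef
  have hI0 : 0 ≤ I := by
    rw [hIdef]
    have h1 : R ^ (p + 1) ≥ 0 := Real.rpow_nonneg hR0.le _
    have hp1 : p + 1 < 0 := by linarith
    rw [neg_div]
    have h2 : R ^ (p + 1) / (p + 1) ≤ 0 :=
      div_nonpos_iff.mpr (Or.inl ⟨h1, hp1.le⟩)
    linarith
  have htγ : (0:ℝ) < t ^ γ := Real.rpow_pos_of_pos ht0 γ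
  set K : ℝ := h t v * Λ ^ 2 * I with hKdef
  have hK0 : 0 ≤ K := by
    have := h_nonneg t ht0 v
    positivity
  -- inner integral bound
  have inner_bound : ∀ s : ℝ, s ∈ Ioc (0:ℝ) t →
      (∫ z in {z : ℝ | R ≤ |z|}, h s v * h s z * h t z * κ z) ≤ K * s ^ (-γ) := by
    intro s hs
    obtain ⟨hs0, hst⟩ := hs
    set c : ℝ := h s v * Λ ^ 2 / t ^ γ with hcdef
    have hc0 : 0 ≤ c := by
      have := h_nonneg s hs0 v
      positivity
    have step1 : (∫ z in {z : ℝ | R ≤ |z|}, h s v * h s z * h t z * κ z)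
        ≤ ∫ z in {z : ℝ | R ≤ |z|}, c * |z| ^ p := by
      refine integral_mono_of_nonneg ?_ (hInt.const_mul c) ?_
      · refine (ae_restrict_iff' hSmeas).mpr (Filter.Eventually.of_forall fun z hz => ?_)
        have hz' : R ≤ |z| := hz
        exact mul_nonneg (mul_nonneg (mul_nonneg (h_nonneg s hs0 v) (h_nonneg s hs0 z))
          (h_nonneg t ht0 z)) (hκ z hz').1
      · refine (ae_restrict_iff' hSmeas).mpr (Filter.Eventually.of_forall fun z hz => ?_)
        have hz' : R ≤ |z| := hz
        have hz0 : (0:ℝ) < |z| := lt_of_lt_of_le hR0 hz'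
        have key : h s v * h s z * h t z * κ z
            ≤ h s v * 1 * (|z| ^ (α - 1) / t ^ γ) * (Λ ^ 2 * |z| ^ (-β₁)) := by
          have h1 := h_nonneg s hs0 v
          have h2 := h_nonneg s hs0 z
          have h3 := h_nonneg t ht0 z
          have h4 := (hκ z hz').1
          have h5 := h_le_one s hs0 z
          have h6 := h_le_pow z
          have h7 := (hκ z hz').2
          have h8 : (0:ℝ) ≤ |z| ^ (α - 1) / t ^ γ := div_nonneg (Real.rpow_nonneg hz0.le _) htγ.le
          gcongr <;> first
            | exact mul_nonneg (mul_nonneg h1 h2) h8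
            | exact mul_nonneg h1 h8
            | assumption
            | positivity
        refine key.trans_eq ?_
        simp only []
        rw [hcdef, hpdef, show α - 1 - β₁ = (α - 1) + (-β₁) by ring, Real.rpow_add hz0]
        field_simp
        try ring
    rw [integral_const_mul, hVal] at step1
    refine step1.trans ?_
    have hsv := h_mono s hs0 hst
    have : c * I ≤ (t ^ γ / s ^ γ * h t v) * Λ ^ 2 / t ^ γ * I := by
      rw [hcdef]
      have : (0:ℝ) ≤ Λ ^ 2 / t ^ γ * I := by positivity
      calc h s v * Λ ^ 2 / t ^ γ * I = h s v * (Λ ^ 2 / t ^ γ * I) := by ring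
        _ ≤ (t ^ γ / s ^ γ * h t v) * (Λ ^ 2 / t ^ γ * I) :=
          mul_le_mul_of_nonneg_right hsv this
        _ = (t ^ γ / s ^ γ * h t v) * Λ ^ 2 / t ^ γ * I := by ring
    refine this.trans_eq ?_
    have hsγ : (0:ℝ) < s ^ γ := Real.rpow_pos_of_pos hs0 γ
    rw [hKdef, Real.rpow_neg hs0.le]
    field_simp
    try ring
  -- outer integral
  have outer_int : IntegrableOn (fun s : ℝ => K * s ^ (-γ)) (Ioc 0 t) := by
    have : IntervalIntegrable (fun s : ℝ => s ^ (-γ)) volume 0 t :=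
      intervalIntegral.intervalIntegrable_rpow' (by linarith)
    exact ((intervalIntegrable_iff_integrableOn_Ioc_of_le ht0.le).mp this).const_mul K
  have outer_bound : (∫ s in Ioc (0:ℝ) t, ∫ z in {z : ℝ | R ≤ |z|},
      h s v * h s z * h t z * κ z) ≤ ∫ s in Ioc (0:ℝ) t, K * s ^ (-γ) := by
    refine integral_mono_of_nonneg ?_ outer_int ?_
    · refine (ae_restrict_iff' measurableSet_Ioc).mpr (Filter.Eventually.of_forall fun s hs => ?_)
      refine setIntegral_nonneg hSmeas fun z hz => ?_
      exact mul_nonneg (mul_nonneg (mul_nonneg (h_nonneg s hs.1 v) (h_nonneg s hs.1 z))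
        (h_nonneg t ht0 z)) (hκ z hz).1
    · exact (ae_restrict_iff' measurableSet_Ioc).mpr
        (Filter.Eventually.of_forall fun s hs => inner_bound s hs)
  have outer_val : (∫ s in Ioc (0:ℝ) t, K * s ^ (-γ)) = K * (α * t ^ (1/α)) := by
    rw [integral_const_mul]
    congr 1
    have : (∫ s in Ioc (0:ℝ) t, s ^ (-γ)) = ∫ s in (0:ℝ)..t, s ^ (-γ) := by
      rw [intervalIntegral.integral_of_le ht0.le]
    have hexp : -γ + 1 = 1/α := by rw [hγdef]; field_simp; ring
    rw [this, _root_.integral_rpow (Or.inl (by linarith : (-1:ℝ) < -γ))]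
    rw [Real.zero_rpow (by rw [hexp]; positivity), hexp]
    rw [sub_zero]
    rw [div_eq_iff (by positivity : (1:ℝ)/α ≠ 0)]
    field_simp
  refine outer_bound.trans (le_of_eq (outer_val.trans ?_))
  have hRneg : R ^ (p + 1) = (R ^ (β₁ - α))⁻¹ := by
    rw [show p + 1 = -(β₁ - α) by rw [hpdef]; ring, Real.rpow_neg hR0.le]
  have hI' : I = 2 / (β₁ - α) * (R ^ (β₁ - α))⁻¹ := by
    rw [hIdef, hRneg, show p + 1 = -(β₁ - α) by rw [hpdef]; ring, neg_div_neg_eq]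
    ring
  rw [hKdef, hI']
  simp only [div_eq_mul_inv]
  ring
end

section
/- Let $\beta_1 > 1$, $\Lambda \ge 1$, $R \ge 1$. Define $\mathrm{Log}\, r = \log(e-1+r)$ and $f_R(s,z) = 1 \wedge \frac{\mathrm{Log}(|z|/R)}{\mathrm{Log}(s/R)}$ for $s > 0$, $|z| \ge R$. Suppose $0 \le \kappa(z) \le \Lambda^2 |z|^{-\beta_1}$ for $|z| \ge R$ ($z \in \mathbb{R}$, $d=1$). Then there exists $C = C(\beta_1,\Lambda) > 0$ independent of $R$ such that for all $t \ge R$ and all $v$ with $|v| \ge 2R$: $\int_0^t \int_{\{|z| \ge R\}} f_R(s,v)\, f_R(s,z)\, f_R(t,z)\, \kappa(z)\, dz\, ds \le \frac{C\, t\, f_R(t,v)}{R^{\beta_1 - 1}}$. -/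
open MeasureTheory Set

lemma aux_log (u w : ℝ) (hw : 0 < w) (huw : w ≤ u) :
    Real.log (Real.exp 1 - 1 + u) ≤ 5 * Real.sqrt (u / w) * Real.log (Real.exp 1 - 1 + w) := by
  have he : (2.7182818283 : ℝ) < Real.exp 1 := Real.exp_one_gt_d9
  have hw1 : (0:ℝ) < Real.exp 1 - 1 + w := by linarith
  have hu1 : (0:ℝ) < Real.exp 1 - 1 + u := by linarith
  have hr1 : (1:ℝ) ≤ u / w := (one_le_div hw).mpr huw
  have hS1 : (1:ℝ) ≤ Real.sqrt (u / w) := by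
    rw [show (1:ℝ) = Real.sqrt 1 by simp]
    exact Real.sqrt_le_sqrt hr1
  -- step 1
  have step1 : Real.log (Real.exp 1 - 1 + u) ≤
      Real.log (Real.exp 1 - 1 + w) + Real.log (u / w) := by
    have hle : Real.exp 1 - 1 + u ≤ (Real.exp 1 - 1 + w) * (u / w) := by
      have h1 : (Real.exp 1 - 1) * 1 ≤ (Real.exp 1 - 1) * (u / w) := by
        apply mul_le_mul_of_nonneg_left hr1; linarith
      have h2 : w * (u / w) = u := by field_simp
      nlinarith
    calc Real.log (Real.exp 1 - 1 + u) ≤ Real.log ((Real.exp 1 - 1 + w) * (u / w)) :=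
          Real.log_le_log hu1 hle
      _ = Real.log (Real.exp 1 - 1 + w) + Real.log (u / w) :=
          Real.log_mul (by positivity) (by positivity)
  -- step 2 : log x ≤ 2 √x
  have step2 : Real.log (u / w) ≤ 2 * Real.sqrt (u / w) := by
    have h0 : (0:ℝ) < u / w := by positivity
    have := Real.log_sqrt h0.le
    have h2 : Real.log (Real.sqrt (u / w)) ≤ Real.sqrt (u / w) - 1 :=
      Real.log_le_sub_one_of_pos (by positivity)
    nlinarith
  -- step 3 : 1/2 ≤ log (e-1+w)
  have step3 : (1/2 : ℝ) ≤ Real.log (Real.exp 1 - 1 + w) := by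
    have hh : Real.exp (1/2) < 1.7 := by
      have h1 : Real.exp (1/2) * Real.exp (1/2) = Real.exp 1 := by
        rw [← Real.exp_add]; norm_num
      have h2 : Real.exp 1 < 2.7182818286 := Real.exp_one_lt_d9
      nlinarith [Real.exp_pos (1/2 : ℝ), sq_nonneg (Real.exp (1/2) - 1.7)]
    calc (1/2 : ℝ) = Real.log (Real.exp (1/2)) := (Real.log_exp _).symm
      _ ≤ Real.log (Real.exp 1 - 1 + w) :=
          Real.log_le_log (Real.exp_pos _) (by linarith)
  nlinarith [Real.sqrt_nonneg (u / w)]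

lemma aux_set (R : ℝ) (hR : 0 < R) :
    {z : ℝ | R ≤ |z|} = Iic (-R) ∪ Ici R := by
  ext z
  simp only [Set.mem_setOf_eq, le_abs, Set.mem_union, Set.mem_Iic, Set.mem_Ici]
  constructor <;> rintro (h | h) <;> first | (left; linarith) | (right; linarith)

lemma aux_intIci (β₁ R : ℝ) (hβ : 1 < β₁) (hR : 0 < R) :
    IntegrableOn (fun z : ℝ => |z| ^ (-β₁)) (Ici R) := by
  have h : IntegrableOn (fun z : ℝ => z ^ (-β₁)) (Ioi R) :=
    integrableOn_Ioi_rpow_of_lt (by linarith) hR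
  have h2 : IntegrableOn (fun z : ℝ => |z| ^ (-β₁)) (Ioi R) :=
    h.congr_fun (fun x hx => by rw [abs_of_pos (hR.trans hx)]) measurableSet_Ioi
  exact (integrableOn_Ici_iff_integrableOn_Ioi).mpr h2

lemma aux_intIic (β₁ R : ℝ) (hβ : 1 < β₁) (hR : 0 < R) :
    IntegrableOn (fun z : ℝ => |z| ^ (-β₁)) (Iic (-R)) := by
  have A : MeasurableEmbedding (fun x : ℝ => -x) :=
    (Homeomorph.neg ℝ).isClosedEmbedding.measurableEmbedding
  have hmap : Measure.map (fun x : ℝ => -x) volume = volume :=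
    Measure.map_neg_eq_self volume
  have key := A.integrableOn_map_iff (f := fun z : ℝ => |z| ^ (-β₁)) (s := Iic (-R)) (μ := volume)
  rw [hmap] at key
  rw [key]
  have hpre : (fun x : ℝ => -x) ⁻¹' Iic (-R) = Ici R := by
    ext x; simp [neg_le]
  rw [hpre]
  have := aux_intIci β₁ R hβ hR
  exact this.congr_fun (fun x hx => by simp [Function.comp]) measurableSet_Ici

lemma aux_valIci (β₁ R : ℝ) (hβ : 1 < β₁) (hR : 0 < R) :
    ∫ z in Ici R, |z| ^ (-β₁) = R ^ (1 - β₁) / (β₁ - 1) := by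
  rw [MeasureTheory.integral_Ici_eq_integral_Ioi]
  rw [setIntegral_congr_fun measurableSet_Ioi
    (fun x hx => by rw [abs_of_pos (hR.trans hx)])]
  rw [integral_Ioi_rpow_of_lt (by linarith) hR, show -β₁ + 1 = 1 - β₁ by ring,
    div_eq_div_iff (by intro h; linarith [h] : (1:ℝ) - β₁ ≠ 0) (by intro h; linarith [h] : β₁ - 1 ≠ 0)]
  ring

lemma aux_valIic (β₁ R : ℝ) (hβ : 1 < β₁) (hR : 0 < R) :
    ∫ z in Iic (-R), |z| ^ (-β₁) = R ^ (1 - β₁) / (β₁ - 1) := by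
  have := integral_comp_neg_Iic (-R) (fun z : ℝ => |z| ^ (-β₁))
  simp only [abs_neg, neg_neg] at this
  rw [this, ← MeasureTheory.integral_Ici_eq_integral_Ioi]
  exact aux_valIci β₁ R hβ hR

lemma aux_int (β₁ R : ℝ) (hβ : 1 < β₁) (hR : 0 < R) :
    IntegrableOn (fun z : ℝ => |z| ^ (-β₁)) {z : ℝ | R ≤ |z|} ∧
    ∫ z in {z : ℝ | R ≤ |z|}, |z| ^ (-β₁) = 2 * R ^ (1 - β₁) / (β₁ - 1) := by
  rw [aux_set R hR]
  have hdisj : Disjoint (Iic (-R)) (Ici R) := by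
    rw [Set.Iic_disjoint_Ici]
    linarith
  constructor
  · exact (aux_intIic β₁ R hβ hR).union (aux_intIci β₁ R hβ hR)
  · rw [setIntegral_union hdisj measurableSet_Ici (aux_intIic β₁ R hβ hR)
      (aux_intIci β₁ R hβ hR), aux_valIic β₁ R hβ hR, aux_valIci β₁ R hβ hR]
    ring

theorem stmt_16 (β₁ Λ : ℝ) (hβ : 1 < β₁) (hΛ : 1 ≤ Λ)
    (Log : ℝ → ℝ) (hLog : ∀ r, Log r = Real.log (Real.exp 1 - 1 + r))
    (f : ℝ → ℝ → ℝ → ℝ)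
    (hf : ∀ R ≥ 1, ∀ s > 0, ∀ z : ℝ,
      f R s z = min 1 (Log (|z| / R) / Log (s / R))) :
    ∃ C > 0, ∀ R : ℝ, 1 ≤ R → ∀ κ : ℝ → ℝ,
      (∀ z : ℝ, R ≤ |z| → 0 ≤ κ z ∧ κ z ≤ Λ ^ 2 * |z| ^ (-β₁)) →
      ∀ t : ℝ, R ≤ t → ∀ v : ℝ, 2 * R ≤ |v| →
        (∫ s in Set.Ioc (0:ℝ) t, ∫ z in {z : ℝ | R ≤ |z|},
            f R s v * f R s z * f R t z * κ z)
          ≤ C * t * f R t v / R ^ (β₁ - 1) := by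
  have hΛ0 : (0:ℝ) < Λ := by linarith
  refine ⟨20 * Λ ^ 2 / (β₁ - 1), div_pos (by positivity) (by linarith), ?_⟩
  intro R hR κ hκ t ht v hv
  have hR0 : (0:ℝ) < R := by linarith
  have ht0 : (0:ℝ) < t := by linarith
  have he : (2.7182818283 : ℝ) < Real.exp 1 := Real.exp_one_gt_d9
  set S : Set ℝ := {z : ℝ | R ≤ |z|} with hSdef
  have hSm : MeasurableSet S := measurableSet_le measurable_const measurable_abs
  -- basic facts about f
  have hfnn : ∀ s : ℝ, 0 < s → ∀ z : ℝ, 0 ≤ f R s z := by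
    intro s hs z
    rw [hf R hR s hs z, hLog, hLog]
    refine le_min zero_le_one (div_nonneg ?_ ?_)
    · apply Real.log_nonneg
      have : 0 ≤ |z| / R := by positivity
      linarith
    · apply Real.log_nonneg
      have : 0 ≤ s / R := by positivity
      linarith
  have hfle1 : ∀ s : ℝ, 0 < s → ∀ z : ℝ, f R s z ≤ 1 := by
    intro s hs z; rw [hf R hR s hs z]; exact min_le_left _ _
  -- key pointwise bound in s
  have hfsv : ∀ s : ℝ, s ∈ Set.Ioc (0:ℝ) t →
      f R s v ≤ 5 * Real.sqrt (t / s) * f R t v := by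
    intro s hs
    obtain ⟨hs0, hst⟩ := hs
    have hts1 : (1:ℝ) ≤ t / s := (one_le_div hs0).mpr hst
    have hsq1 : (1:ℝ) ≤ Real.sqrt (t / s) := by
      rw [show (1:ℝ) = Real.sqrt 1 by simp]; exact Real.sqrt_le_sqrt hts1
    have hc1 : (1:ℝ) ≤ 5 * Real.sqrt (t / s) := by nlinarith
    have hc0 : (0:ℝ) ≤ 5 * Real.sqrt (t / s) := by linarith
    rw [hf R hR s hs0 v, hf R hR t ht0 v, hLog, hLog, hLog]
    set Lv := Real.log (Real.exp 1 - 1 + |v| / R)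
    set Ls := Real.log (Real.exp 1 - 1 + s / R)
    set Lt := Real.log (Real.exp 1 - 1 + t / R)
    have hLv0 : 0 ≤ Lv := by
      apply Real.log_nonneg
      have : 0 ≤ |v| / R := by positivity
      linarith
    have hLs0 : 0 < Ls := by
      apply Real.log_pos
      have : 0 < s / R := by positivity
      linarith
    have hLt0 : 0 < Lt := by
      apply Real.log_pos
      have : 0 < t / R := by positivity
      linarith
    have key : Lt ≤ 5 * Real.sqrt (t / s) * Ls := by
      have hratio : (t / R) / (s / R) = t / s := by
        field_simp
      have h1 := aux_log (t / R) (s / R) (by positivity) (by gcongr)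
      rwa [hratio] at h1
    rcases le_total 1 (Lv / Lt) with h | h
    · rw [min_eq_left h]
      calc min 1 (Lv / Ls) ≤ 1 := min_le_left _ _
        _ ≤ 5 * Real.sqrt (t / s) * 1 := by linarith
    · rw [min_eq_right h]
      calc min 1 (Lv / Ls) ≤ Lv / Ls := min_le_right _ _
        _ ≤ 5 * Real.sqrt (t / s) * (Lv / Lt) := by
            rw [← mul_div_assoc, div_le_div_iff₀ hLs0 hLt0]
            nlinarith [mul_le_mul_of_nonneg_left key hLv0]
  -- main estimates
  obtain ⟨hIint, hIval⟩ := aux_int β₁ R hβ hR0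
  set I : ℝ := 2 * R ^ ((1:ℝ) - β₁) / (β₁ - 1) with hIdef
  have hI0 : 0 ≤ I := by
    have : (0:ℝ) ≤ R ^ ((1:ℝ) - β₁) := Real.rpow_nonneg hR0.le _
    have hb : (0:ℝ) < β₁ - 1 := by linarith
    positivity
  have hftv0 : 0 ≤ f R t v := hfnn t ht0 v
  have hInner : ∀ s ∈ Set.Ioc (0:ℝ) t,
      (∫ z in S, f R s v * f R s z * f R t z * κ z)
        ≤ 5 * Real.sqrt (t / s) * f R t v * (Λ ^ 2 * I) := by
    intro s hs
    have hdom : IntegrableOn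
        (fun z : ℝ => (5 * Real.sqrt (t / s) * f R t v) * (Λ ^ 2 * |z| ^ (-β₁))) S :=
      (hIint.const_mul (Λ ^ 2)).const_mul _
    have step : (∫ z in S, f R s v * f R s z * f R t z * κ z)
        ≤ ∫ z in S, (5 * Real.sqrt (t / s) * f R t v) * (Λ ^ 2 * |z| ^ (-β₁)) := by
      apply integral_mono_of_nonneg
      · filter_upwards [ae_restrict_mem hSm] with z hz
        exact mul_nonneg (mul_nonneg (mul_nonneg (hfnn s hs.1 v) (hfnn s hs.1 z))
          (hfnn t ht0 z)) (hκ z hz).1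
      · exact hdom
      · filter_upwards [ae_restrict_mem hSm] with z hz
        have k1 := (hκ z hz).1
        have k2 := (hκ z hz).2
        have h1 : f R s v * f R s z * f R t z * κ z
            ≤ (5 * Real.sqrt (t / s) * f R t v) * 1 * 1 * (Λ ^ 2 * |z| ^ (-β₁)) := by
          gcongr <;>
            first
              | exact mul_nonneg (mul_nonneg (by norm_num) (Real.sqrt_nonneg _)) hftv0
              | exact hfnn s hs.1 v
              | exact hfnn s hs.1 z
              | exact hfnn t ht0 z
              | exact hfsv s hs
              | exact hfle1 s hs.1 z
              | exact hfle1 t ht0 z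
        calc f R s v * f R s z * f R t z * κ z
            ≤ (5 * Real.sqrt (t / s) * f R t v) * 1 * 1 * (Λ ^ 2 * |z| ^ (-β₁)) := h1
          _ = (5 * Real.sqrt (t / s) * f R t v) * (Λ ^ 2 * |z| ^ (-β₁)) := by ring
    calc (∫ z in S, f R s v * f R s z * f R t z * κ z)
        ≤ ∫ z in S, (5 * Real.sqrt (t / s) * f R t v) * (Λ ^ 2 * |z| ^ (-β₁)) := step
      _ = 5 * Real.sqrt (t / s) * f R t v * (Λ ^ 2 * I) := by
          rw [integral_const_mul, integral_const_mul, hIval]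
  -- rewrite the bound using rpow
  set A : ℝ := 5 * f R t v * (Λ ^ 2 * I) * t ^ ((1:ℝ)/2) with hAdef
  have hA0 : 0 ≤ A := by
    have := Real.rpow_nonneg ht0.le ((1:ℝ)/2)
    positivity
  have hsqrteq : ∀ s ∈ Set.Ioc (0:ℝ) t,
      5 * Real.sqrt (t / s) * f R t v * (Λ ^ 2 * I) = A * s ^ (-((1:ℝ)/2)) := by
    intro s hs
    have hs0 := hs.1
    rw [Real.sqrt_eq_rpow, Real.div_rpow ht0.le hs0.le, Real.rpow_neg hs0.le, hAdef]
    field_simp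
  have hdom2 : IntegrableOn (fun s : ℝ => A * s ^ (-((1:ℝ)/2))) (Set.Ioc (0:ℝ) t) := by
    have h1 : IntervalIntegrable (fun s : ℝ => s ^ (-((1:ℝ)/2))) volume 0 t :=
      intervalIntegral.intervalIntegrable_rpow' (by norm_num)
    exact h1.1.const_mul _
  have houter : (∫ s in Set.Ioc (0:ℝ) t, ∫ z in S, f R s v * f R s z * f R t z * κ z)
      ≤ ∫ s in Set.Ioc (0:ℝ) t, A * s ^ (-((1:ℝ)/2)) := by
    apply integral_mono_of_nonneg
    · filter_upwards [ae_restrict_mem measurableSet_Ioc] with s hs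
      apply setIntegral_nonneg hSm
      intro z hz
      exact mul_nonneg (mul_nonneg (mul_nonneg (hfnn s hs.1 v) (hfnn s hs.1 z))
        (hfnn t ht0 z)) (hκ z hz).1
    · exact hdom2
    · filter_upwards [ae_restrict_mem measurableSet_Ioc] with s hs
      rw [← hsqrteq s hs]
      exact hInner s hs
  have hval : (∫ s in Set.Ioc (0:ℝ) t, A * s ^ (-((1:ℝ)/2)))
      = A * (2 * t ^ ((1:ℝ)/2)) := by
    rw [integral_const_mul]
    congr 1
    rw [← intervalIntegral.integral_of_le ht0.le,
      integral_rpow (Or.inl (by norm_num)),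
      show -((1:ℝ)/2) + 1 = 1/2 by norm_num,
      Real.zero_rpow (by norm_num)]
    ring
  have htt : t ^ ((1:ℝ)/2) * t ^ ((1:ℝ)/2) = t := by
    rw [← Real.rpow_add ht0]
    norm_num
  have hRR : R ^ ((1:ℝ) - β₁) = (R ^ (β₁ - 1))⁻¹ := by
    rw [show (1:ℝ) - β₁ = -(β₁ - 1) by ring, Real.rpow_neg hR0.le]
  calc (∫ s in Set.Ioc (0:ℝ) t, ∫ z in S, f R s v * f R s z * f R t z * κ z)
      ≤ ∫ s in Set.Ioc (0:ℝ) t, A * s ^ (-((1:ℝ)/2)) := houter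
    _ = A * (2 * t ^ ((1:ℝ)/2)) := hval
    _ = (20 * Λ ^ 2 / (β₁ - 1)) * (t ^ ((1:ℝ)/2) * t ^ ((1:ℝ)/2)) * f R t v
          * (R ^ (β₁ - 1))⁻¹ := by
        rw [hAdef, hIdef, hRR]
        ring
    _ = 20 * Λ ^ 2 / (β₁ - 1) * t * f R t v / R ^ (β₁ - 1) := by
        rw [htt]
        ring
end
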